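/- arXiv:1202.2209 — 6 statements merged into one kernel-verified Lean document; each statement's English description precedes it below -/
import Mathlib

section
/- There exists a social network (with 6 agents, 3 of them source nodes, product set {t_1,t_2,t_3}, constant thresholds θ and weights w_1 < w_2 with θ < w_1) whose associated social network game has no Nash equilibrium. -/
/-!
Each source node must adopt its only product, as `c0 > 0`. Given that, `θ < w₁ < w₂` makes a
triangle node strictly prefer copying its triangle predecessor when that product is available
to it, and otherwise following its source. These best responses chase each other around the
triangle: `t₂` at node 2 forces `t₂` at 0, `t₃` at 1 and `t₃` at 2, while `t₃` at node 2 forces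
`t₁` at 0, `t₁` at 1 and `t₂` at 2. So no joint strategy is a best response to itself.
-/

open Finset

/-- A social network: a finite weighted directed graph together with product
assignments and thresholds.  `nbr i` is the set `N(i)` of in-neighbours of `i`. -/
structure SN (V P : Type) [Fintype V] [DecidableEq V] [DecidableEq P] where
  nbr : V → Finset V
  w : V → V → ℝ
  prod : V → Finset P
  θ : V → P → ℝ
  no_self : ∀ i, i ∉ nbr i
  w_nonneg : ∀ i j, 0 ≤ w i j
  w_le_one : ∀ i j, w i j ≤ 1
  sum_w_le_one : ∀ i, (nbr i).Nonempty → ∑ j ∈ nbr i, w j i ≤ 1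
  prod_nonempty : ∀ i, (prod i).Nonempty
  θ_pos : ∀ i t, 0 < θ i t
  θ_le_one : ∀ i t, θ i t ≤ 1

variable {V P : Type} [Fintype V] [DecidableEq V] [DecidableEq P]

/-- A source node: a node with no incoming edges. -/
def SN.isSource (S : SN V P) (i : V) : Prop := S.nbr i = ∅

/-- The payoff of player `i` in the joint strategy `s` (`none` is the null strategy `t₀`,
`c0 > 0` is the constant payoff of source nodes adopting a product). -/
def SN.payoff (S : SN V P) (c0 : ℝ) (s : V → Option P) (i : V) : ℝ :=
  match s i with
  | none => 0
  | some t =>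
      if S.nbr i = ∅ then c0
      else (∑ j ∈ (S.nbr i).filter (fun j => s j = some t), S.w j i) - S.θ i t

/-- A joint strategy is valid if every player only uses products from his product set. -/
def SN.valid (S : SN V P) (s : V → Option P) : Prop :=
  ∀ i t, s i = some t → t ∈ S.prod i

/-- The strategy `a` belongs to the strategy set `P(i) ∪ {t₀}` of player `i`. -/
def SN.allowed (S : SN V P) (i : V) (a : Option P) : Prop :=
  ∀ t, a = some t → t ∈ S.prod i

/-- (Pure) Nash equilibrium of the social network game. -/
def SN.NE (S : SN V P) (c0 : ℝ) (s : V → Option P) : Prop :=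
  S.valid s ∧ ∀ i a, S.allowed i a →
    S.payoff c0 (Function.update s i a) i ≤ S.payoff c0 s i

/-- The best response of a node with product set `A` whose heavier in-neighbour plays `x` and
whose lighter one plays `b ∈ A`: imitate the heavier one if possible, else the lighter one. -/
def followOr (A : Finset P) (b : P) : Option P → Option P
  | some a => if a ∈ A then some a else some b
  | none => some b

namespace SN

variable (S : SN V P) {c0 : ℝ} {s : V → Option P} {i : V}

def adoptionPayoff (s : V → Option P) (i : V) (t : P) : ℝ :=
  ∑ j ∈ (S.nbr i).filter (fun j => s j = some t), S.w j i - S.θ i t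

lemma payoff_of_eq_some (hi : S.nbr i ≠ ∅) {t : P} (ht : s i = some t) :
    S.payoff c0 s i = S.adoptionPayoff s i t := by
  simp only [payoff, ht, if_neg hi, adoptionPayoff]

lemma adoptionPayoff_update_self (a : Option P) (t : P) :
    S.adoptionPayoff (Function.update s i a) i t = S.adoptionPayoff s i t := by
  refine congrArg (· - S.θ i t) (sum_congr (filter_congr fun j hj => ?_) fun _ _ => rfl)
  rw [Function.update_of_ne (ne_of_mem_of_not_mem hj (S.no_self i))]

lemma payoff_update_some (hi : S.nbr i ≠ ∅) (t : P) :
    S.payoff c0 (Function.update s i (some t)) i = S.adoptionPayoff s i t := by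
  rw [S.payoff_of_eq_some hi (Function.update_self ..), adoptionPayoff_update_self]

lemma adoptionPayoff_of_nbr_eq_pair {p q : V} (hi : S.nbr i = {p, q}) (hpq : p ≠ q) (t : P) :
    S.adoptionPayoff s i t =
      (if s p = some t then S.w p i else 0) + (if s q = some t then S.w q i else 0) - S.θ i t := by
  rw [adoptionPayoff, hi, sum_filter, sum_pair hpq]

variable {S}

lemma NE.source_eq (hs : S.NE c0 s) (hc0 : 0 < c0) (hi : S.nbr i = ∅) {t : P}
    (hp : S.prod i = {t}) : s i = some t := by
  cases h : s i with
  | none =>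
    have hdev := hs.2 i (some t) (by rintro u ⟨⟩; simp [hp])
    simp only [payoff, Function.update_self, hi, if_true, h] at hdev
    linarith
  | some u => simpa [hp] using hs.1 i u h

lemma NE.eq_some_of_forall_adoptionPayoff_lt (hs : S.NE c0 s) (hi : S.nbr i ≠ ∅) {a : P}
    (ha : a ∈ S.prod i) (hpos : 0 < S.adoptionPayoff s i a)
    (hlt : ∀ c ∈ S.prod i, c ≠ a → S.adoptionPayoff s i c < S.adoptionPayoff s i a) :
    s i = some a := by
  have hdev := hs.2 i (some a) (by rintro u ⟨⟩; exact ha)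
  rw [S.payoff_update_some hi] at hdev
  cases h : s i with
  | none =>
    simp only [payoff, h] at hdev
    linarith
  | some c =>
    rw [S.payoff_of_eq_some hi h] at hdev
    by_contra hca
    linarith [hlt c (hs.1 i c h) (by rintro rfl; exact hca rfl)]

lemma NE.eq_followOr (hs : S.NE c0 s) {p q : V} {b : P} {th : ℝ} (hi : S.nbr i = {p, q})
    (hq : s q = some b) (hb : b ∈ S.prod i) (hθ : ∀ t, S.θ i t = th) (hth : th < S.w q i)
    (hw : S.w q i < S.w p i) : s i = followOr (S.prod i) b (s p) := by
  have hpq : p ≠ q := by rintro rfl; exact lt_irrefl _ hw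
  have hne : S.nbr i ≠ ∅ := by simp [hi]
  have hpay := S.adoptionPayoff_of_nbr_eq_pair (s := s) hi hpq
  have hwq := S.w_nonneg q i
  have hth0 : 0 < th := hθ b ▸ S.θ_pos i b
  have of_forall_ne : (∀ c ∈ S.prod i, s p ≠ some c) → s i = some b := by
    intro hpc
    refine hs.eq_some_of_forall_adoptionPayoff_lt hne hb ?_ fun c hc hcb => ?_
    · simp only [hpay, hq, hpc b hb, hθ, if_true, if_false]
      linarith
    · simp only [hpay, hq, hpc b hb, hpc c hc, hθ, Option.some_inj, Ne.symm hcb, if_true,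
        if_false]
      linarith
  rcases hp : s p with _ | a
  · exact of_forall_ne (by simp [hp])
  by_cases ha : a ∈ S.prod i
  · rw [followOr, if_pos ha]
    refine hs.eq_some_of_forall_adoptionPayoff_lt hne ha ?_ fun c hc hca => ?_
    · simp only [hpay, hp, hθ, if_true]
      split_ifs <;> linarith
    · simp only [hpay, hp, hθ, Option.some_inj, hca.symm, if_true, if_false]
      split_ifs <;> linarith
  · rw [followOr, if_neg ha]
    exact of_forall_ne fun c hc hpc => ha (Option.some_inj.mp (hp.symm.trans hpc) ▸ hc)

end SN

lemma followOr_triangle_not_fixed :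
    ∀ x y z : Option (Fin 3), x = followOr {0, 1} 0 z → y = followOr {0, 2} 2 x →
      z = followOr {1, 2} 1 y → False := by
  decide

theorem SN.not_exists_NE_of_triangle (S : SN (Fin 6) (Fin 3)) {c0 w₁ w₂ th : ℝ}
    (hc0 : 0 < c0) (h₁ : th < w₁) (h₁₂ : w₁ < w₂) (hθ : ∀ i t, S.θ i t = th)
    (hn0 : S.nbr 0 = {2, 3}) (hn1 : S.nbr 1 = {0, 4}) (hn2 : S.nbr 2 = {1, 5})
    (hn3 : S.nbr 3 = ∅) (hn4 : S.nbr 4 = ∅) (hn5 : S.nbr 5 = ∅)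
    (hw20 : S.w 2 0 = w₂) (hw01 : S.w 0 1 = w₂) (hw12 : S.w 1 2 = w₂)
    (hw30 : S.w 3 0 = w₁) (hw41 : S.w 4 1 = w₁) (hw52 : S.w 5 2 = w₁)
    (hp0 : S.prod 0 = {0, 1}) (hp1 : S.prod 1 = {0, 2}) (hp2 : S.prod 2 = {1, 2})
    (hp3 : S.prod 3 = {0}) (hp4 : S.prod 4 = {2}) (hp5 : S.prod 5 = {1}) :
    ¬ ∃ s, S.NE c0 s := by
  rintro ⟨s, hs⟩
  have h0 := hs.eq_followOr hn0 (hs.source_eq hc0 hn3 hp3) (by simp [hp0]) (hθ 0)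
    (by rwa [hw30]) (by rwa [hw30, hw20])
  have h1 := hs.eq_followOr hn1 (hs.source_eq hc0 hn4 hp4) (by simp [hp1]) (hθ 1)
    (by rwa [hw41]) (by rwa [hw41, hw01])
  have h2 := hs.eq_followOr hn2 (hs.source_eq hc0 hn5 hp5) (by simp [hp2]) (hθ 2)
    (by rwa [hw52]) (by rwa [hw52, hw12])
  rw [hp0] at h0
  rw [hp1] at h1
  rw [hp2] at h2
  exact followOr_triangle_not_fixed _ _ _ h0 h1 h2

def triangleNbr : Fin 6 → Finset (Fin 6)
  | 0 => {2, 3} | 1 => {0, 4} | 2 => {1, 5} | 3 => ∅ | 4 => ∅ | 5 => ∅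

noncomputable def triangleW : Fin 6 → Fin 6 → ℝ
  | 2, 0 | 0, 1 | 1, 2 => 1 / 2
  | 3, 0 | 4, 1 | 5, 2 => 1 / 4
  | _, _ => 0

def triangleProd : Fin 6 → Finset (Fin 3)
  | 0 => {0, 1} | 1 => {0, 2} | 2 => {1, 2} | 3 => {0} | 4 => {2} | 5 => {1}

noncomputable def triangleNetwork : SN (Fin 6) (Fin 3) where
  nbr := triangleNbr
  w := triangleW
  prod := triangleProd
  θ := fun _ _ => 1 / 8
  no_self := by decide
  w_nonneg i j := by unfold triangleW; split <;> norm_num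
  w_le_one i j := by unfold triangleW; split <;> norm_num
  sum_w_le_one i _ := by fin_cases i <;> simp [triangleNbr, triangleW] <;> norm_num
  prod_nonempty := by decide
  θ_pos _ _ := by norm_num
  θ_le_one _ _ := by norm_num

/-- there is a social network with 6 agents (3 of them source nodes),
product set {t₁,t₂,t₃}, constant thresholds θ and weights w₁ < w₂ with θ < w₁,
whose associated game has no Nash equilibrium.  Agents 0,1,2 form the directed
triangle 0→1→2→0 with weights w₂ and product sets {t₁,t₂}, {t₁,t₃}, {t₂,t₃};
agents 3,4,5 are source nodes with product sets {t₁}, {t₃}, {t₂} pointing with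
weight w₁ to 0, 1 and 2 respectively (products: t₁ = 0, t₂ = 1, t₃ = 2). -/
theorem exists_network_without_NE :
    ∃ (S : SN (Fin 6) (Fin 3)) (c0 w₁ w₂ th : ℝ),
      0 < c0 ∧ 0 < th ∧ th < w₁ ∧ w₁ < w₂ ∧
      -- thresholds are constant
      (∀ i t, S.θ i t = th) ∧
      -- the triangle
      S.nbr 0 = {2, 3} ∧ S.nbr 1 = {0, 4} ∧ S.nbr 2 = {1, 5} ∧
      -- the three source nodes
      S.nbr 3 = ∅ ∧ S.nbr 4 = ∅ ∧ S.nbr 5 = ∅ ∧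
      -- weights
      S.w 2 0 = w₂ ∧ S.w 0 1 = w₂ ∧ S.w 1 2 = w₂ ∧
      S.w 3 0 = w₁ ∧ S.w 4 1 = w₁ ∧ S.w 5 2 = w₁ ∧
      -- product sets
      S.prod 0 = {0, 1} ∧ S.prod 1 = {0, 2} ∧ S.prod 2 = {1, 2} ∧
      S.prod 3 = {0} ∧ S.prod 4 = {2} ∧ S.prod 5 = {1} ∧
      -- the associated game has no Nash equilibrium
      ¬ ∃ s, S.NE c0 s := by
  refine ⟨triangleNetwork, 1, 1 / 4, 1 / 2, 1 / 8, one_pos, by norm_num, by norm_num, by norm_num,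
    fun _ _ => rfl, rfl, rfl, rfl, rfl, rfl, rfl, rfl, rfl, rfl, rfl, rfl, rfl,
    rfl, rfl, rfl, rfl, rfl, rfl, ?_⟩
  exact triangleNetwork.not_exists_NE_of_triangle (w₁ := 1 / 4) (w₂ := 1 / 2) (th := 1 / 8)
    one_pos (by norm_num) (by norm_num) (fun _ _ => rfl) rfl rfl rfl rfl rfl rfl rfl rfl rfl rfl rfl
    rfl rfl rfl rfl rfl rfl rfl
end

section
/- If the underlying graph of a social network is a directed acyclic graph, then the associated social network game has a non-trivial Nash equilibrium. -/
open Finset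

variable {V P : Type} [Fintype V] [DecidableEq V] [DecidableEq P]

/-!
In a DAG the in-neighbour relation is well-founded. A player's best response depends only on
what its in-neighbours play, so best responses can be fixed in topological order, giving a
profile that is a fixed point of the best-response map and hence a Nash equilibrium. A minimal
node is a source, and a source strictly prefers any product (payoff `c0 > 0`) to `t₀`.
-/

theorem Finite.wellFounded_of_forall_not_transGen_self {α : Type*} [Finite α] {r : α → α → Prop}
    (h : ∀ a, ¬ Relation.TransGen r a a) : WellFounded r :=
  have : Std.Irrefl (Relation.TransGen r) := ⟨h⟩
  Subrelation.wf Relation.TransGen.single (Finite.wellFounded_of_trans_of_irrefl _)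

/-- The fixed point is built at `i` by well-founded recursion from its values below `i`. -/
theorem WellFounded.exists_isFixedPt {α β : Type*} [Nonempty β] {r : α → α → Prop}
    (hr : WellFounded r) (F : (α → β) → α → β)
    (hF : ∀ f g i, (∀ j, r j i → f j = g j) → F f i = F g i) :
    ∃ f, Function.IsFixedPt F f := by
  classical
  let f := hr.fix fun i ih ↦ F (fun j ↦ if h : r j i then ih j h else Classical.arbitrary β) i
  refine ⟨f, funext fun i ↦ ?_⟩
  rw [show f i = _ from hr.fix_eq _ i]
  exact hF _ _ i fun j hj ↦ by rw [dif_pos hj]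

/-- The best choice in `Option P` when `some t` (for `t ∈ A`) is worth `u t` and `none` is
worth `0`. -/
noncomputable def bestOption {P : Type*} (A : Finset P) (hA : A.Nonempty) (u : P → ℝ) :
    Option P :=
  let t := (A.exists_max_image u hA).choose
  if 0 < u t then some t else none

section bestOption

variable {P : Type*} {A : Finset P} {hA : A.Nonempty} {u : P → ℝ}

theorem mem_of_bestOption_eq_some {t : P} (h : bestOption A hA u = some t) : t ∈ A := by
  dsimp only [bestOption] at h
  split_ifs at h with hpos
  exact Option.some_injective _ h ▸ (A.exists_max_image u hA).choose_spec.1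

theorem elim_le_elim_bestOption {a : Option P} (ha : ∀ t, a = some t → t ∈ A) :
    a.elim 0 u ≤ (bestOption A hA u).elim 0 u := by
  obtain ⟨-, hmax⟩ := (A.exists_max_image u hA).choose_spec
  dsimp only [bestOption]
  split_ifs with hpos
  · cases a with
    | none => exact hpos.le
    | some t => exact hmax t (ha t rfl)
  · cases a with
    | none => exact le_rfl
    | some t => exact (hmax t (ha t rfl)).trans (not_lt.1 hpos)

theorem bestOption_ne_none {t : P} (ht : t ∈ A) (hpos : 0 < u t) : bestOption A hA u ≠ none := by
  have hmax := (A.exists_max_image u hA).choose_spec.2 t ht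
  simp only [bestOption, ne_eq, ite_eq_right_iff, reduceCtorEq, imp_false, not_not]
  exact hpos.trans_le hmax

end bestOption

namespace SN

variable (S : SN V P) (c0 : ℝ)

noncomputable def productPayoff (s : V → Option P) (i : V) (t : P) : ℝ :=
  if S.nbr i = ∅ then c0
  else (∑ j ∈ (S.nbr i).filter (fun j => s j = some t), S.w j i) - S.θ i t

noncomputable def bestResponse (s : V → Option P) (i : V) : Option P :=
  bestOption (S.prod i) (S.prod_nonempty i) (S.productPayoff c0 s i)

variable {S c0}

theorem payoff_eq_elim (s : V → Option P) (i : V) :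
    S.payoff c0 s i = (s i).elim 0 (S.productPayoff c0 s i) := by
  cases h : s i <;> simp [payoff, productPayoff, h]

theorem productPayoff_congr {s s' : V → Option P} {i : V} (h : ∀ j ∈ S.nbr i, s j = s' j) :
    S.productPayoff c0 s i = S.productPayoff c0 s' i := by
  funext t
  unfold productPayoff
  congr 3
  exact filter_congr fun j hj ↦ by rw [h j hj]

theorem payoff_update_self (s : V → Option P) (i : V) (a : Option P) :
    S.payoff c0 (Function.update s i a) i = a.elim 0 (S.productPayoff c0 s i) := by
  rw [payoff_eq_elim, Function.update_self, productPayoff_congr]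
  intro j hj
  exact Function.update_of_ne (ne_of_mem_of_not_mem hj (S.no_self i)) a s

theorem bestResponse_congr {s s' : V → Option P} {i : V} (h : ∀ j ∈ S.nbr i, s j = s' j) :
    S.bestResponse c0 s i = S.bestResponse c0 s' i := by
  rw [bestResponse, bestResponse, productPayoff_congr h]

theorem isNE_of_isFixedPt_bestResponse {s : V → Option P}
    (hs : Function.IsFixedPt (S.bestResponse c0) s) : S.NE c0 s := by
  refine ⟨fun i t hit ↦ ?_, fun i a ha ↦ ?_⟩
  · rw [← hs] at hit
    exact mem_of_bestOption_eq_some hit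
  · rw [payoff_update_self, payoff_eq_elim, ← congrFun hs i]
    exact elim_le_elim_bestOption ha

theorem bestResponse_ne_none_of_isSource (hc0 : 0 < c0) (s : V → Option P) {i : V}
    (hi : S.isSource i) : S.bestResponse c0 s i ≠ none := by
  obtain ⟨t, ht⟩ := S.prod_nonempty i
  have hnbr : S.nbr i = ∅ := hi
  exact bestOption_ne_none ht (by simpa [productPayoff, hnbr] using hc0)

end SN

/-- if the underlying graph of a social network is a DAG
(no directed cycles), then the associated game has a non-trivial Nash
equilibrium. -/
theorem exists_nontrivial_NE_of_dag [Nonempty V] (S : SN V P) (c0 : ℝ) (hc0 : 0 < c0)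
    (hdag : ∀ i : V, ¬ Relation.TransGen (fun j k => j ∈ S.nbr k) i i) :
    ∃ s, S.NE c0 s ∧ ∃ i, s i ≠ none := by
  have hwf := Finite.wellFounded_of_forall_not_transGen_self hdag
  obtain ⟨s, hs⟩ := hwf.exists_isFixedPt (S.bestResponse c0)
    fun _ _ _ h ↦ SN.bestResponse_congr fun j hj ↦ h j hj
  obtain ⟨i, -, hi⟩ := hwf.has_min Set.univ Set.univ_nonempty
  have hsource : S.isSource i := eq_empty_of_forall_notMem fun j hj ↦ hi j trivial hj
  refine ⟨s, SN.isNE_of_isFixedPt_bestResponse hs, i, ?_⟩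
  rw [← hs]
  exact SN.bestResponse_ne_none_of_isSource hc0 s hsource
end

section
/- Every social network game whose underlying graph is a directed acyclic graph has the finite improvement property: every improvement path is finite. -/
open Finset

variable {V P : Type} [Fintype V] [DecidableEq V] [DecidableEq P]

/-- One improvement step: some player deviates to a strategy from his strategy
set that strictly increases his payoff. -/
def SN.ImpStep (S : SN V P) (c0 : ℝ) (s s' : V → Option P) : Prop :=
  ∃ i a, S.allowed i a ∧ a ≠ s i ∧ s' = Function.update s i a ∧
    S.payoff c0 s i < S.payoff c0 s' i

/-- The finite improvement property: every improvement path is finite, i.e. there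
is no infinite sequence of improvement steps (starting from a valid joint strategy). -/
def SN.FIP (S : SN V P) (c0 : ℝ) : Prop :=
  ¬ ∃ ρ : ℕ → (V → Option P), S.valid (ρ 0) ∧ ∀ k, S.ImpStep c0 (ρ k) (ρ (k + 1))

/-
Order the players along the acyclic neighbour relation. Once all neighbours of a player have
stopped moving, his payoff can only change when he moves himself, and then it strictly increases.
It ranges over the finitely many payoffs of valid joint strategies, so it stabilises, and so does
the player. By well-founded induction every player eventually stops, whereas every improvement
step moves somebody.
-/

open Filter Relation

theorem wellFounded_of_not_transGen_self {α : Type*} [Finite α] {r : α → α → Prop}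
    (h : ∀ a, ¬ TransGen r a a) : WellFounded r :=
  haveI : IsTrans α (TransGen r) := ⟨fun _ _ _ => TransGen.trans⟩
  haveI : Std.Irrefl (TransGen r) := ⟨h⟩
  Subrelation.wf TransGen.single (Finite.wellFounded_of_trans_of_irrefl _)

theorem eventuallyConst_atTop_iff_eventually_succ_eq {α : Type*} {f : ℕ → α} :
    EventuallyConst f atTop ↔ ∀ᶠ n in atTop, f (n + 1) = f n :=
  eventuallyConst_atTop_nat.trans eventually_atTop.symm

theorem eventuallyConst_of_finite_range_of_eventually_le_succ {β : Type*} [PartialOrder β]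
    {g : ℕ → β} (hfin : (Set.range g).Finite) (hle : ∀ᶠ n in atTop, g n ≤ g (n + 1)) :
    EventuallyConst g atTop := by
  obtain ⟨N, hN⟩ := eventually_atTop.1 hle
  have hmono : MonotoneOn g (Set.Ici N) := monotoneOn_nat_Ici_of_le_succ hN
  obtain ⟨_, ⟨M, hNM, rfl⟩, hmax⟩ :=
    (hfin.subset (Set.image_subset_range g _)).exists_maximal (Set.nonempty_Ici.image g)
  refine eventuallyConst_atTop.2 ⟨M, fun k hMk => ?_⟩
  have hNk : k ∈ Set.Ici N := le_trans hNM hMk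
  have hle : g M ≤ g k := hmono hNM hNk hMk
  exact le_antisymm (hmax ⟨k, hNk, rfl⟩ hle) hle

namespace SN

variable (S : SN V P) (c0 : ℝ)

theorem payoff_congr {s s' : V → Option P} {i : V} (hi : s i = s' i)
    (hnbr : ∀ j ∈ S.nbr i, s j = s' j) : S.payoff c0 s i = S.payoff c0 s' i := by
  unfold SN.payoff
  rw [← hi]
  rcases s i with _ | t
  · rfl
  · refine if_congr Iff.rfl rfl (congrArg (· - S.θ i t) (Finset.sum_congr ?_ fun _ _ => rfl))
    exact Finset.filter_congr fun j hj => by rw [hnbr j hj]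

theorem finite_setOf_valid : {s | S.valid s}.Finite := by
  refine (Set.Finite.pi fun i => ((S.prod i).finite_toSet.image some).insert none).subset ?_
  intro s hs i _
  cases h : s i with
  | none => exact Set.mem_insert _ _
  | some t => exact Set.mem_insert_of_mem _ ⟨t, hs i t h, rfl⟩

variable {S c0} {s s' : V → Option P}

theorem ImpStep.valid (h : S.ImpStep c0 s s') (hs : S.valid s) : S.valid s' := by
  obtain ⟨i, a, ha, -, rfl, -⟩ := h
  intro j t hjt
  rcases eq_or_ne j i with rfl | hji
  · exact ha t (by simpa using hjt)
  · exact hs j t (by simpa [hji] using hjt)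

theorem ImpStep.ne (h : S.ImpStep c0 s s') : s' ≠ s := by
  obtain ⟨i, a, -, ha, rfl, -⟩ := h
  intro heq
  exact ha (by simpa using congrFun heq i)

theorem ImpStep.payoff_lt_of_ne (h : S.ImpStep c0 s s') {i : V} (hi : s' i ≠ s i) :
    S.payoff c0 s i < S.payoff c0 s' i := by
  obtain ⟨j, a, -, -, rfl, hlt⟩ := h
  obtain rfl : i = j := by_contra fun hij => hi (Function.update_of_ne hij _ _)
  exact hlt

theorem ImpStep.payoff_le (h : S.ImpStep c0 s s') {i : V} (hnbr : ∀ j ∈ S.nbr i, s' j = s j) :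
    S.payoff c0 s i ≤ S.payoff c0 s' i := by
  by_cases hi : s' i = s i
  · exact (S.payoff_congr c0 hi.symm fun j hj => (hnbr j hj).symm).le
  · exact (h.payoff_lt_of_ne hi).le

theorem eventuallyConst_of_eventuallyConst_nbr {ρ : ℕ → V → Option P}
    (hstep : ∀ k, S.ImpStep c0 (ρ k) (ρ (k + 1))) (hvalid : ∀ k, S.valid (ρ k)) (i : V)
    (hnbr : ∀ j ∈ S.nbr i, EventuallyConst (fun k => ρ k j) atTop) :
    EventuallyConst (fun k => ρ k i) atTop := by
  have hfrozen : ∀ᶠ k in atTop, ∀ j ∈ S.nbr i, ρ (k + 1) j = ρ k j :=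
    (eventually_all_finset _).2 fun j hj =>
      eventuallyConst_atTop_iff_eventually_succ_eq.1 (hnbr j hj)
  have hfin : (Set.range fun k => S.payoff c0 (ρ k) i).Finite :=
    (S.finite_setOf_valid.image fun s => S.payoff c0 s i).subset <| by
      rintro _ ⟨k, rfl⟩
      exact ⟨ρ k, hvalid k, rfl⟩
  have hpayoff : ∀ᶠ k in atTop, S.payoff c0 (ρ (k + 1)) i = S.payoff c0 (ρ k) i :=
    eventuallyConst_atTop_iff_eventually_succ_eq.1 <|
      eventuallyConst_of_finite_range_of_eventually_le_succ hfin <|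
        hfrozen.mono fun k hk => (hstep k).payoff_le hk
  refine eventuallyConst_atTop_iff_eventually_succ_eq.2 (hpayoff.mono fun k hk => ?_)
  by_contra hmove
  exact ((hstep k).payoff_lt_of_ne hmove).ne hk.symm

end SN

theorem fip_of_dag_general (S : SN V P) (c0 : ℝ)
    (hdag : ∀ i : V, ¬ Relation.TransGen (fun j k => j ∈ S.nbr k) i i) :
    S.FIP c0 := by
  rintro ⟨ρ, hvalid0, hstep⟩
  have hvalid : ∀ k, S.valid (ρ k) := fun k =>
    Nat.rec hvalid0 (fun k hk => (hstep k).valid hk) k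
  have hconst (i : V) : EventuallyConst (fun k => ρ k i) atTop :=
    (wellFounded_of_not_transGen_self hdag).induction i
      (S.eventuallyConst_of_eventuallyConst_nbr hstep hvalid)
  obtain ⟨k, hk⟩ := (eventually_all.2 fun i =>
    eventuallyConst_atTop_iff_eventually_succ_eq.1 (hconst i)).exists
  exact (hstep k).ne (funext hk)

/-- every social network game whose underlying graph is a DAG has
the finite improvement property. -/
theorem fip_of_dag (S : SN V P) (c0 : ℝ) (hc0 : 0 < c0)
    (hdag : ∀ i : V, ¬ Relation.TransGen (fun j k => j ∈ S.nbr k) i i) :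
    S.FIP c0 :=
  fip_of_dag_general S c0 hdag
end

section
/- Let S be a social network whose underlying graph has no source nodes, and let s ≠ (t_0,...,t_0) be a Nash equilibrium of the associated game. Then for every product t adopted by some player in s and every agent i with s_i = t, there exists a self-sustaining strongly connected subgraph C_t contained in {j : s_j = t} and a node j ∈ C_t with a path from j to i. -/
open Finset

variable {V P : Type} [Fintype V] [DecidableEq V] [DecidableEq P]

/-- `C` is a self-sustaining strongly connected subgraph (SCS) for product `t`:
it is nonempty, strongly connected (as an induced subgraph), every node in it
has `t` available, and every node in it receives accumulated weight at least its
threshold from its neighbours inside `C`. -/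
def SN.SelfSust (S : SN V P) (t : P) (C : Finset V) : Prop :=
  C.Nonempty ∧
  (∀ i ∈ C, ∀ j ∈ C,
      Relation.ReflTransGen (fun a b => a ∈ C ∧ b ∈ C ∧ a ∈ S.nbr b) i j) ∧
  ∀ i ∈ C, t ∈ S.prod i ∧ S.θ i t ≤ ∑ j ∈ S.nbr i ∩ C, S.w j i

/-! In an equilibrium without sources, every adopter of `t` gets at least its threshold from
adopting in-neighbours, since otherwise switching to `t₀` pays more. Among the adopters reaching
`i` through adopters, take one whose set of such ancestors is smallest; that set is strongly
connected and contains every adopting in-neighbour of its members, so it is self-sustaining. -/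

namespace Relation

variable {α : Type*} {r : α → α → Prop}

theorem ReflTransGen.induced_of_pred_closed {C : Set α} (hC : ∀ b ∈ C, ∀ a, r a b → a ∈ C)
    {a b : α} (hab : ReflTransGen r a b) (hb : b ∈ C) :
    ReflTransGen (fun x y => x ∈ C ∧ y ∈ C ∧ r x y) a b := by
  induction hab using ReflTransGen.head_induction_on with
  | refl => exact .refl
  | @head a c hac _ ih =>
    have hcC : c ∈ C := by
      rcases ih.cases_head with rfl | ⟨_, h, _⟩
      exacts [hb, h.1]
    exact .head ⟨hC c hcC a hac, hcC, hac⟩ ih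

theorem exists_pred_closed_stronglyConnected_reaching [Fintype α] (r : α → α → Prop) (i : α) :
    ∃ C : Finset α, ∃ j ∈ C, ReflTransGen r j i ∧
      (∀ a ∈ C, ∀ b ∈ C, ReflTransGen (fun x y => x ∈ C ∧ y ∈ C ∧ r x y) a b) ∧
      (∀ b ∈ C, ∀ a, r a b → a ∈ C) ∧ ∀ a ∈ C, ReflTransGen r a i := by
  classical
  let anc : α → Finset α := fun x => {k | ReflTransGen r k x}
  have anc_mono {a b : α} (hab : ReflTransGen r a b) : anc a ⊆ anc b := fun k hk => by
    simp only [anc, Finset.mem_filter, Finset.mem_univ, true_and] at hk ⊢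
    exact hk.trans hab
  -- a node with the fewest ancestors among those reaching `i` lies in an initial strong component
  obtain ⟨j, hji, hmin⟩ := (Finset.univ.filter (ReflTransGen r · i)).exists_min_image
    (fun k => (anc k).card) ⟨i, Finset.mem_filter.2 ⟨Finset.mem_univ i, .refl⟩⟩
  simp only [Finset.mem_filter, Finset.mem_univ, true_and] at hji hmin
  have mem_anc {a : α} : a ∈ anc j ↔ ReflTransGen r a j := by simp [anc]
  have hclosed : ∀ b ∈ anc j, ∀ a, r a b → a ∈ anc j := fun b hb a hab =>
    mem_anc.2 (.head hab (mem_anc.1 hb))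
  have hback {b : α} (hb : b ∈ anc j) : ReflTransGen r j b := by
    have hbj := mem_anc.1 hb
    have heq := Finset.eq_of_subset_of_card_le (anc_mono hbj) (hmin b (hbj.trans hji))
    have hj : j ∈ anc b := heq ▸ mem_anc.2 .refl
    simpa [anc] using hj
  refine ⟨anc j, j, mem_anc.2 .refl, hji, fun a ha b hb => ?_, hclosed,
    fun a ha => (mem_anc.1 ha).trans hji⟩
  exact ReflTransGen.induced_of_pred_closed (C := ↑(anc j)) hclosed
    ((mem_anc.1 ha).trans (hback hb)) hb

end Relation

theorem SN.NE.threshold_le_sum_adopters {S : SN V P} {c0 : ℝ} {s : V → Option P}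
    (hs : S.NE c0 s) {k : V} {t : P} (hk : s k = some t) (hsrc : ¬ S.isSource k) :
    S.θ k t ≤ ∑ j ∈ (S.nbr k).filter (fun j => s j = some t), S.w j k := by
  have hdev := hs.2 k none (fun _ h => by cases h)
  simp only [SN.payoff, Function.update_self, hk, if_neg (show S.nbr k ≠ ∅ from hsrc)] at hdev
  linarith

theorem NE_structure_of_no_source_general (S : SN V P) (c0 : ℝ)
    (hns : ∀ i, ¬ S.isSource i) (s : V → Option P)
    (hs : S.NE c0 s) :
    ∀ (t : P) (i : V), s i = some t →
      ∃ C : Finset V, S.SelfSust t C ∧ (∀ j ∈ C, s j = some t) ∧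
        ∃ j ∈ C, Relation.ReflTransGen (fun a b => a ∈ S.nbr b) j i := by
  intro t i hi
  -- closure under predecessors for this relation means containing all adopting in-neighbours
  obtain ⟨C, j, hjC, hji, hconn, hclosed, hreach⟩ :=
    Relation.exists_pred_closed_stronglyConnected_reaching
      (fun a b => a ∈ S.nbr b ∧ s a = some t) i
  have hadopt : ∀ k ∈ C, s k = some t := fun k hk => by
    rcases (hreach k hk).cases_head with rfl | ⟨_, h, _⟩
    exacts [hi, h.2]
  refine ⟨C, ⟨⟨j, hjC⟩, fun a ha b hb => ?_, fun k hk => ⟨hs.1 k t (hadopt k hk), ?_⟩⟩, hadopt,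
    j, hjC, Relation.ReflTransGen.mono (fun _ _ h => h.1) _ _ hji⟩
  · exact Relation.ReflTransGen.mono (fun _ _ h => ⟨h.1, h.2.1, h.2.2.1⟩) _ _ (hconn a ha b hb)
  · calc S.θ k t ≤ ∑ j ∈ (S.nbr k).filter (fun j => s j = some t), S.w j k :=
          hs.threshold_le_sum_adopters (hadopt k hk) (hns k)
      _ ≤ ∑ j ∈ S.nbr k ∩ C, S.w j k :=
          Finset.sum_le_sum_of_subset_of_nonneg
            (fun m hm => Finset.mem_inter.2
              ⟨(Finset.mem_filter.1 hm).1, hclosed k hk m (Finset.mem_filter.1 hm)⟩)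
            (fun m _ _ => S.w_nonneg m k)

/-- in a network with no source nodes, if `s` is a non-trivial Nash
equilibrium, then for every product `t` and every agent `i` with `s i = t` there
is a self-sustaining SCS `C` for `t` contained in `{j | s j = t}` and a node
`j ∈ C` with a path from `j` to `i` in the underlying graph. -/
theorem NE_structure_of_no_source (S : SN V P) (c0 : ℝ) (hc0 : 0 < c0)
    (hns : ∀ i, ¬ S.isSource i) (s : V → Option P)
    (hs : S.NE c0 s) (hnt : s ≠ fun _ => none) :
    ∀ (t : P) (i : V), s i = some t →
      ∃ C : Finset V, S.SelfSust t C ∧ (∀ j ∈ C, s j = some t) ∧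
        ∃ j ∈ C, Relation.ReflTransGen (fun a b => a ∈ S.nbr b) j i :=
  NE_structure_of_no_source_general S c0 hns s hs
end

section
/- Let S be a social network whose underlying graph has no source nodes. The all-t_0 joint strategy is the unique Nash equilibrium of the associated game if and only if there exists no product t with a self-sustaining strongly connected subgraph for t in the graph. -/
open Finset

variable {V P : Type} [Fintype V] [DecidableEq V] [DecidableEq P]

/-!
If `s` is an equilibrium other than all-`t₀` and some player adopts `t`, every adopter of `t` meets
its threshold from the other adopters (otherwise it would switch to `t₀`). Inside the set of
adopters, a minimal nonempty set closed under taking in-neighbours is strongly connected, and it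
still meets all thresholds, so it is a self-sustaining SCS for `t`.

Conversely, sets meeting all their thresholds for `t` are closed under union, so there is a greatest
one `D`, which contains any self-sustaining SCS `C`. Letting exactly `D` adopt `t` is an equilibrium
different from all-`t₀`: by maximality, no node outside `D` meets its threshold from `D`.
-/

theorem exists_closed_stronglyConnected_subset {α : Type*} [DecidableEq α] (nbr : α → Finset α)
    {A : Finset α} (hA : A.Nonempty) :
    ∃ D ⊆ A, D.Nonempty ∧ (∀ i ∈ D, nbr i ∩ A ⊆ D) ∧
      ∀ i ∈ D, ∀ j ∈ D, Relation.ReflTransGen (fun a b => a ∈ D ∧ b ∈ D ∧ a ∈ nbr b) i j := by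
  classical
  obtain ⟨D, hDA, ⟨-, hDne, hDclosed⟩, hDmin⟩ := exists_minimal_le_of_wellFoundedLT
    (fun D : Finset α => D ⊆ A ∧ D.Nonempty ∧ ∀ i ∈ D, nbr i ∩ A ⊆ D) A
    ⟨subset_rfl, hA, fun _ _ => inter_subset_right⟩
  refine ⟨D, hDA, hDne, hDclosed, fun i hi j hj => ?_⟩
  let ancestors :=
    D.filter fun a => Relation.ReflTransGen (fun a b => a ∈ D ∧ b ∈ D ∧ a ∈ nbr b) a j
  have hclosed : ∀ b ∈ ancestors, nbr b ∩ A ⊆ ancestors := by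
    intro b hb a ha
    obtain ⟨hbD, hbj⟩ := mem_filter.1 hb
    have haD := hDclosed b hbD ha
    exact mem_filter.2 ⟨haD, .head ⟨haD, hbD, (mem_inter.1 ha).1⟩ hbj⟩
  have hD : D ⊆ ancestors :=
    hDmin ⟨(filter_subset _ _).trans hDA, ⟨j, mem_filter.2 ⟨hj, .refl⟩⟩, hclosed⟩
      (filter_subset _ _)
  exact (mem_filter.1 (hD hi)).2

def adoptOn {α β : Type*} [DecidableEq α] (D : Finset α) (t : β) : α → Option β :=
  fun a => if a ∈ D then some t else none

theorem sum_filter_adoptOn_eq_some {α β : Type*} [DecidableEq α] [DecidableEq β] (D N : Finset α)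
    (f : α → ℝ) (t t' : β) :
    ∑ j ∈ N.filter (fun j => adoptOn D t j = some t'), f j =
      if t' = t then ∑ j ∈ N ∩ D, f j else 0 := by
  split_ifs with h
  · subst h
    congr 1
    ext j
    by_cases hj : j ∈ D <;> simp [adoptOn, hj]
  · refine sum_eq_zero fun j hj => absurd (mem_filter.1 hj).2 ?_
    by_cases hj : j ∈ D <;> simp [adoptOn, hj, Ne.symm h]

namespace SN

variable (S : SN V P)

def Sustaining (t : P) (A : Finset V) : Prop :=
  ∀ i ∈ A, t ∈ S.prod i ∧ S.θ i t ≤ ∑ j ∈ S.nbr i ∩ A, S.w j i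

theorem sum_nbr_inter_mono (i : V) {A B : Finset V} (h : A ⊆ B) :
    ∑ j ∈ S.nbr i ∩ A, S.w j i ≤ ∑ j ∈ S.nbr i ∩ B, S.w j i :=
  sum_le_sum_of_subset_of_nonneg (inter_subset_inter_left h) fun j _ _ => S.w_nonneg j i

variable {S}

theorem Sustaining.threshold_le_of_subset {t : P} {A B : Finset V} (hA : S.Sustaining t A)
    (h : A ⊆ B) {i : V} (hi : i ∈ A) : S.θ i t ≤ ∑ j ∈ S.nbr i ∩ B, S.w j i :=
  (hA i hi).2.trans (S.sum_nbr_inter_mono i h)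

theorem Sustaining.union {t : P} {A B : Finset V} (hA : S.Sustaining t A)
    (hB : S.Sustaining t B) : S.Sustaining t (A ∪ B) := by
  intro i hi
  rcases mem_union.1 hi with hi | hi
  · exact ⟨(hA i hi).1, hA.threshold_le_of_subset subset_union_left hi⟩
  · exact ⟨(hB i hi).1, hB.threshold_le_of_subset subset_union_right hi⟩

theorem Sustaining.insert {t : P} {A : Finset V} {i : V} (hA : S.Sustaining t A)
    (ht : t ∈ S.prod i) (hi : S.θ i t ≤ ∑ j ∈ S.nbr i ∩ A, S.w j i) :
    S.Sustaining t (insert i A) := by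
  intro j hj
  rcases mem_insert.1 hj with rfl | hj
  · exact ⟨ht, hi.trans (S.sum_nbr_inter_mono j (subset_insert _ _))⟩
  · exact ⟨(hA j hj).1, hA.threshold_le_of_subset (subset_insert _ _) hj⟩

variable (S) in
theorem exists_isGreatest_sustaining (t : P) : ∃ D, IsGreatest {A | S.Sustaining t A} D := by
  classical
  let F := univ.filter (S.Sustaining t)
  refine ⟨F.sup id, ?_, fun A hA => le_sup (f := id) (mem_filter.2 ⟨mem_univ A, hA⟩)⟩
  exact sup_induction (p := S.Sustaining t) (by simp [Sustaining]) (fun A hA B hB => hA.union hB)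
    fun A hA => (mem_filter.1 hA).2

theorem sum_lt_of_isGreatest {t : P} {D : Finset V} (hD : IsGreatest {A | S.Sustaining t A} D)
    {i : V} (hi : i ∉ D) (ht : t ∈ S.prod i) : ∑ j ∈ S.nbr i ∩ D, S.w j i < S.θ i t := by
  by_contra! h
  exact hi (hD.2 (hD.1.insert ht h) (mem_insert_self i D))

theorem Sustaining.exists_selfSust {t : P} {A : Finset V} (hA : S.Sustaining t A)
    (hne : A.Nonempty) : ∃ C ⊆ A, S.SelfSust t C := by
  obtain ⟨C, hCA, hCne, hCclosed, hCconn⟩ := exists_closed_stronglyConnected_subset S.nbr hne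
  refine ⟨C, hCA, hCne, hCconn, fun i hi => ?_⟩
  have hinter : S.nbr i ∩ C = S.nbr i ∩ A :=
    Subset.antisymm (inter_subset_inter_left hCA)
      fun j hj => mem_inter.2 ⟨(mem_inter.1 hj).1, hCclosed i hi hj⟩
  rw [hinter]
  exact hA i (hCA hi)

theorem payoff_of_eq_none {c0 : ℝ} {s : V → Option P} {i : V} (h : s i = none) :
    S.payoff c0 s i = 0 := by
  simp [payoff, h]

theorem payoff_of_eq_some_s7 {c0 : ℝ} {s : V → Option P} {i : V} {t : P} (hi : ¬ S.isSource i)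
    (h : s i = some t) :
    S.payoff c0 s i = ∑ j ∈ (S.nbr i).filter (fun j => s j = some t), S.w j i - S.θ i t := by
  have hnbr : S.nbr i ≠ ∅ := hi
  simp [payoff, h, hnbr]

variable (S) in
theorem filter_update_eq (s : V → Option P) (i : V) (a : Option P) (t : P) :
    (S.nbr i).filter (fun j => Function.update s i a j = some t) =
      (S.nbr i).filter (fun j => s j = some t) :=
  filter_congr fun j hj => by
    rw [Function.update_of_ne (ne_of_mem_of_not_mem hj (S.no_self i))]

theorem payoff_update_none {c0 : ℝ} {s : V → Option P} {i : V} :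
    S.payoff c0 (Function.update s i none) i = 0 :=
  payoff_of_eq_none (Function.update_self i none s)

theorem payoff_update_some_s7 {c0 : ℝ} {s : V → Option P} {i : V} {t : P} (hi : ¬ S.isSource i) :
    S.payoff c0 (Function.update s i (some t)) i =
      ∑ j ∈ (S.nbr i).filter (fun j => s j = some t), S.w j i - S.θ i t := by
  rw [payoff_of_eq_some_s7 hi (Function.update_self i (some t) s), filter_update_eq]

theorem NE_iff {c0 : ℝ} {s : V → Option P} (hns : ∀ i, ¬ S.isSource i) :
    S.NE c0 s ↔ S.valid s ∧ ∀ i, 0 ≤ S.payoff c0 s i ∧ ∀ t ∈ S.prod i,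
      ∑ j ∈ (S.nbr i).filter (fun j => s j = some t), S.w j i - S.θ i t ≤ S.payoff c0 s i := by
  refine and_congr Iff.rfl (forall_congr' fun i => ?_)
  simp [Option.forall, allowed, payoff_update_none, payoff_update_some_s7 (hns i)]

theorem NE_none {c0 : ℝ} (hns : ∀ i, ¬ S.isSource i) : S.NE c0 (fun _ => none) := by
  refine (NE_iff hns).2 ⟨fun _ _ h => by simp at h, fun i => ?_⟩
  simp [payoff_of_eq_none, fun t => (S.θ_pos i t).le]

theorem sustaining_of_NE {c0 : ℝ} {s : V → Option P} (hns : ∀ i, ¬ S.isSource i)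
    (hs : S.NE c0 s) (t : P) : S.Sustaining t (univ.filter fun j => s j = some t) := by
  intro i hi
  have hsi : s i = some t := (mem_filter.1 hi).2
  have hpay := ((NE_iff hns).1 hs).2 i |>.1
  rw [payoff_of_eq_some_s7 (hns i) hsi] at hpay
  have hadopt : (S.nbr i).filter (fun j => s j = some t) =
      S.nbr i ∩ univ.filter fun j => s j = some t := by
    ext j
    simp
  refine ⟨hs.1 i t hsi, ?_⟩
  rw [← hadopt]
  linarith

theorem NE_adoptOn {c0 : ℝ} {t : P} {D : Finset V} (hns : ∀ i, ¬ S.isSource i)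
    (hD : S.Sustaining t D)
    (hout : ∀ i ∉ D, t ∈ S.prod i → ∑ j ∈ S.nbr i ∩ D, S.w j i < S.θ i t) :
    S.NE c0 (adoptOn D t) := by
  have hvalid : S.valid (adoptOn D t) := by
    intro i t' h
    by_cases hi : i ∈ D
    · obtain rfl : t = t' := by simpa [adoptOn, hi] using h
      exact (hD i hi).1
    · simp [adoptOn, hi] at h
  refine (NE_iff hns).2 ⟨hvalid, fun i => ?_⟩
  simp only [sum_filter_adoptOn_eq_some]
  by_cases hi : i ∈ D
  · rw [payoff_of_eq_some_s7 (hns i) (t := t) (by simp [adoptOn, hi]),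
      sum_filter_adoptOn_eq_some, if_pos rfl]
    refine ⟨sub_nonneg.2 (hD i hi).2, fun t' _ => ?_⟩
    split_ifs with ht'
    · rw [ht']
    · linarith [S.θ_pos i t', (hD i hi).2]
  · rw [payoff_of_eq_none (by simp [adoptOn, hi])]
    refine ⟨le_rfl, fun t' ht' => ?_⟩
    split_ifs with h
    · subst h
      linarith [hout i hi ht']
    · linarith [S.θ_pos i t']

end SN

theorem trivial_unique_NE_iff_no_selfSust_general (S : SN V P) (c0 : ℝ)
    (hns : ∀ i, ¬ S.isSource i) :
    (S.NE c0 (fun _ => none) ∧ ∀ s, S.NE c0 s → s = fun _ => none) ↔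
      ¬ ∃ (t : P) (C : Finset V), S.SelfSust t C := by
  constructor
  · rintro ⟨-, huniq⟩ ⟨t, C, ⟨i, hi⟩, -, hC⟩
    obtain ⟨D, hD⟩ := S.exists_isGreatest_sustaining t
    have hadopt := huniq _ (SN.NE_adoptOn hns hD.1 fun j hj => SN.sum_lt_of_isGreatest hD hj)
    have hiD : i ∈ D := hD.2 hC hi
    simpa [adoptOn, hiD] using congrFun hadopt i
  · refine fun hno => ⟨SN.NE_none hns, fun s hs => funext fun i => ?_⟩
    cases hsi : s i with
    | none => rfl
    | some t =>
      obtain ⟨C, -, hC⟩ := (SN.sustaining_of_NE hns hs t).exists_selfSust ⟨i, by simpa using hsi⟩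
      exact (hno ⟨t, C, hC⟩).elim

/-- for a network with no source nodes, the all-`t₀` joint strategy
is the unique Nash equilibrium iff there is no product `t` with a
self-sustaining SCS for `t` in the underlying graph. -/
theorem trivial_unique_NE_iff_no_selfSust (S : SN V P) (c0 : ℝ) (hc0 : 0 < c0)
    (hns : ∀ i, ¬ S.isSource i) :
    (S.NE c0 (fun _ => none) ∧ ∀ s, S.NE c0 s → s = fun _ => none) ↔
      ¬ ∃ (t : P) (C : Finset V), S.SelfSust t C :=
  trivial_unique_NE_iff_no_selfSust_general S c0 hns
end

section
/- There exists a social network whose underlying graph is the 3-cycle 1→2→3→1 (with two products available to each node and thresholds below the edge weights) whose associated game admits an infinite improvement path; hence the game does not have the FIP. -/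
open Finset

variable {V P : Type} [Fintype V] [DecidableEq V] [DecidableEq P]

/-! With unit weights and thresholds `1/2`, a player earns `1/2` when it adopts its
predecessor's product and `-1/2` otherwise, so switching to the predecessor's product is an
improvement. There are six states, in each of which some player disagrees with its
predecessor; letting it copy the predecessor leads to the next state, and after six such
steps the path returns to its start, so it can be run forever. -/

namespace SN

variable (S : SN V P) (c0 : ℝ)

theorem payoff_of_nbr_eq_singleton {s : V → Option P} {i j : V} {t : P}
    (hi : S.nbr i = {j}) (hs : s i = some t) :
    S.payoff c0 s i = (if s j = some t then S.w j i else 0) - S.θ i t := by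
  simp only [payoff, hs, hi, singleton_ne_empty, if_false, filter_singleton]
  split_ifs <;> simp

-- The deviator's payoff rises from `-θ i t < 0` to `w j i - θ i t' > 0`.
theorem impStep_update_of_nbr_eq_singleton {s : V → Option P} {i j : V} {t t' : P}
    (hi : S.nbr i = {j}) (hsi : s i = some t) (hsj : s j = some t') (htt' : t ≠ t')
    (ht' : t' ∈ S.prod i) (hθ : S.θ i t' < S.w j i) :
    S.ImpStep c0 s (Function.update s i (some t')) := by
  have hji : j ≠ i := fun h => S.no_self i (by simp [hi, h])
  refine ⟨i, some t', fun _ h => Option.some_injective _ h ▸ ht', by simp [hsi, htt'.symm],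
    rfl, ?_⟩
  rw [S.payoff_of_nbr_eq_singleton c0 hi hsi,
    S.payoff_of_nbr_eq_singleton c0 hi (Function.update_self i _ s)]
  simp only [hsj, Option.some.injEq, htt'.symm, ↓reduceIte, zero_sub, Function.update_of_ne hji,
    neg_lt_sub_iff_lt_add]
  linarith [S.θ_pos i t]

end SN

noncomputable def threeCycle : SN (Fin 3) (Fin 2) where
  nbr i := {i - 1}
  w _ _ := 1
  prod _ := univ
  θ _ _ := 1 / 2
  no_self i := by fin_cases i <;> decide
  w_nonneg _ _ := zero_le_one
  w_le_one _ _ := le_rfl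
  sum_w_le_one _ _ := by simp
  prod_nonempty _ := univ_nonempty
  θ_pos _ _ := by norm_num
  θ_le_one _ _ := by norm_num

def threeCycleState : Fin 6 → Fin 3 → Fin 2 :=
  ![![1, 1, 0], ![0, 1, 0], ![0, 1, 1], ![0, 0, 1], ![1, 0, 1], ![1, 0, 0]]

theorem threeCycleState_succ (m : Fin 6) : ∃ i, threeCycleState m i ≠ threeCycleState m (i - 1) ∧
    threeCycleState (m + 1) =
      Function.update (threeCycleState m) i (threeCycleState m (i - 1)) := by
  revert m
  decide

def threeCyclePath (k : ℕ) : Fin 3 → Option (Fin 2) :=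
  some ∘ threeCycleState (Fin.ofNat 6 k)

theorem threeCycle_impStep (c0 : ℝ) (k : ℕ) :
    threeCycle.ImpStep c0 (threeCyclePath k) (threeCyclePath (k + 1)) := by
  obtain ⟨i, hne, hsucc⟩ := threeCycleState_succ (Fin.ofNat 6 k)
  have hk : Fin.ofNat 6 (k + 1) = Fin.ofNat 6 k + 1 := by ext; simp [Fin.val_add]
  rw [threeCyclePath, threeCyclePath, hk, hsucc, Function.comp_update]
  exact threeCycle.impStep_update_of_nbr_eq_singleton c0 rfl rfl rfl hne (mem_univ _)
    (by norm_num [threeCycle])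

/-- there is a social network on the 3-cycle `0 → 1 → 2 → 0`, with
two products available to each node and thresholds below the corresponding edge
weights, whose associated game admits an infinite improvement path; hence the
game does not have the FIP. -/
theorem exists_cycle_without_FIP :
    ∃ (S : SN (Fin 3) (Fin 2)) (c0 : ℝ), 0 < c0 ∧
      (∀ i, S.nbr i = {i - 1}) ∧
      (∀ i, S.prod i = Finset.univ) ∧
      (∀ i t, S.θ i t < S.w (i - 1) i) ∧
      (∃ ρ : ℕ → (Fin 3 → Option (Fin 2)),
        S.valid (ρ 0) ∧ ∀ k, S.ImpStep c0 (ρ k) (ρ (k + 1))) ∧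
      ¬ S.FIP c0 := by
  have hvalid : threeCycle.valid (threeCyclePath 0) := fun _ _ _ => mem_univ _
  have hpath := threeCycle_impStep 1
  exact ⟨threeCycle, 1, one_pos, fun _ => rfl, fun _ => rfl, fun _ _ => by norm_num [threeCycle],
    ⟨threeCyclePath, hvalid, hpath⟩, fun hFIP => hFIP ⟨threeCyclePath, hvalid, hpath⟩⟩
end
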